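/- arXiv:2303.08596 — 2 statements merged into one kernel-verified Lean document; each statement's English description precedes it below -/
import Mathlib

section
/- Pointwise covariance identities (equations (2.4)–(2.5) of the paper): For every edge e ∈ E, ν_⋄[𝐧_e²] = μ_★[𝒰''(J_e) − 𝒰'(J_e)²], and for every pair of distinct edges e ≠ f, ν_⋄[𝐧_e 𝐧_f] = −μ_★[𝒰'(J_e) 𝒰'(J_f)], where under μ_★ we write J = dθ. -/
open MeasureTheory Real
noncomputable section

/-- Gradient of a `G`-valued function on the vertices: `(df)_e = f(tgt e) - f(src e)`. -/
def grad {V E G : Type*} [AddCommGroup G] (src tgt : E → V) (f : V → G) : E → G :=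
  fun e => f (tgt e) - f (src e)

/-- Divergence of a `G`-valued 1-form: `(d*ω)_x = Σ_{e : tgt e = x} ω_e - Σ_{e : src e = x} ω_e`. -/
def divg {V E G : Type*} [Fintype E] [DecidableEq V] [AddCommGroup G]
    (src tgt : E → V) (ω : E → G) : V → G :=
  fun x => (∑ e, if tgt e = x then ω e else 0) - ∑ e, if src e = x then ω e else 0

/-- The spin weight `w(α) = Σ_{n∈ℤ} e^{-𝒱(n)} e^{inα}`, written with `p n = e^{-𝒱(n)}`. -/
def wgt (p : ℤ → ℝ) (α : ℝ) : ℝ := ∑' n : ℤ, p n * Real.cos (n * α)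

/-- The dual spin potential `𝒰 = -log w`. -/
def spinU (p : ℤ → ℝ) : ℝ → ℝ := fun t => -Real.log (wgt p t)

/-- Coordinates for the torus `(ℝ/2πℤ)^V`: product over `V` of Lebesgue measure on the
fundamental domain `(-π, π]`. -/
def torusBox (V : Type*) [Fintype V] : Measure (V → ℝ) :=
  Measure.pi fun _ => volume.restrict (Set.Ioc (-π) π)

/-- Expectation with respect to the ⋄-height measure
`ν_⋄(n) ∝ exp(-Σ_e 𝒱(n_e))` on `{n ∈ ℤ^E : d* n = 0}`, with `p = e^{-𝒱}`. -/
def diamExp {V E : Type*} [Fintype E] [DecidableEq V] (src tgt : E → V)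
    (p : ℤ → ℝ) (F : (E → ℤ) → ℝ) : ℝ :=
  (∑' n : {n : E → ℤ // divg src tgt n = 0}, F n.1 * ∏ e, p (n.1 e)) /
    ∑' n : {n : E → ℤ // divg src tgt n = 0}, ∏ e, p (n.1 e)

/-- Expectation with respect to the ★-spin measure `μ_★(dθ) ∝ Π_e w((dθ)_e) dθ` on the torus
`(ℝ/2πℤ)^V` (normalising constants cancel in the ratio). -/
def starSpinExp {V E : Type*} [Fintype V] [Fintype E] (src tgt : E → V)
    (p : ℤ → ℝ) (F : (V → ℝ) → ℝ) : ℝ :=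
  (∫ θ, F θ * ∏ e, wgt p (grad src tgt θ e) ∂ torusBox V) /
    ∫ θ, ∏ e, wgt p (grad src tgt θ e) ∂ torusBox V

/-!
Write `w(α) = Σ_m p_m e^{imα}` (`fourierSum`). Expanding the product, `Π_e w(J_e)` becomes
`Σ_{n ∈ ℤ^E} Π_e p_{n_e} e^{i n_e J_e}`, and summation by parts turns `Σ_e n_e (dθ)_e` into
`Σ_x (d*n)_x θ_x`; integrating over the torus therefore kills every `n` with `d*n ≠ 0` and weights
the others by `(2π)^|V|`, which identifies the ★-partition function with the ⋄-one. Replacing the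
factor `w(J_e)` by `w'(J_e) = Σ_m i m p_m e^{imJ_e}` or `w''(J_e)` inserts `i n_e` or `-n_e²` into
the height weight, and `𝒰' = -w'/w`, `𝒰'' - 𝒰'² = -w''/w` give the two identities.
-/

theorem summable_prod_norm_and_tsum_prod_eq_prod_tsum {ι κ 𝕜 : Type*} [Fintype ι]
    [NormedField 𝕜] [CompleteSpace 𝕜] (q : ι → κ → 𝕜) (hq : ∀ i, Summable fun m => ‖q i m‖) :
    Summable (fun n : ι → κ => ∏ i, ‖q i (n i)‖) ∧
      ∑' n : ι → κ, ∏ i, q i (n i) = ∏ i, ∑' m, q i m := by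
  -- the `Fintype` instance must be generalised for `Finite.induction_empty_option` to apply
  suffices H : ∀ (α : Type _) [Finite α] [Fintype α] (q : α → κ → 𝕜),
      (∀ i, Summable fun m => ‖q i m‖) → Summable (fun n : α → κ => ∏ i, ‖q i (n i)‖) ∧
        ∑' n : α → κ, ∏ i, q i (n i) = ∏ i, ∑' m, q i m from H ι q hq
  intro α _
  induction α using Finite.induction_empty_option with
  | @of_equiv α β e ih =>
    intro _ q hq
    have := Fintype.ofEquiv β e.symm
    obtain ⟨hs, ht⟩ := ih (fun a => q (e a)) (fun a => hq (e a))
    let E : (α → κ) ≃ (β → κ) := e.arrowCongr (Equiv.refl κ)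
    refine ⟨?_, ?_⟩
    · rw [← E.summable_iff]
      convert hs using 2 with n
      simp [E, ← e.prod_comp]
    · rw [← E.tsum_eq, ← e.prod_comp, ← ht]
      congr 1 with n
      simp [E, ← e.prod_comp]
  | h_empty =>
    intro _ q hq
    exact ⟨.of_finite, by simp⟩
  | @h_option α _ ih =>
    intro instOption q hq
    obtain rfl : instOption = instFintypeOption := Subsingleton.elim _ _
    obtain ⟨hs, ht⟩ := ih (fun a => q (some a)) (fun a => hq (some a))
    let E := (Equiv.piOptionEquivProd (β := fun _ : Option α => κ)).symm
    refine ⟨?_, ?_⟩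
    · rw [← E.summable_iff]
      convert (hq none).mul_of_nonneg hs (fun _ => norm_nonneg _)
        (fun _ => Finset.prod_nonneg fun _ _ => norm_nonneg _) using 2 with x
      simp [E, Fintype.prod_option]
    · rw [← E.tsum_eq, Fintype.prod_option, ← ht,
        tsum_mul_tsum_of_summable_norm (hq none) (hs.congr fun n => (norm_prod _ _).symm)]
      congr 1 with x
      simp [E, Fintype.prod_option]

theorem prod_update_mul_apply_self {ι M : Type*} [Fintype ι] [DecidableEq ι] [CommMonoid M]
    (f : ι → M) (i : ι) (a : M) : ∏ j, Function.update f i (a * f i) j = a * ∏ j, f j := by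
  rw [Finset.prod_update_of_mem (Finset.mem_univ i), mul_assoc, Finset.sdiff_singleton_eq_erase,
    Finset.mul_prod_erase _ _ (Finset.mem_univ i)]

theorem prod_update_update_mul_apply_self {ι M : Type*} [Fintype ι] [DecidableEq ι]
    [CommMonoid M] (f : ι → M) {i j : ι} (hij : i ≠ j) (a b : M) :
    ∏ k, Function.update (Function.update f i (a * f i)) j (b * f j) k = a * b * ∏ k, f k := by
  rw [← Function.update_of_ne hij.symm (a * f i) f, prod_update_mul_apply_self,
    prod_update_mul_apply_self, mul_left_comm, mul_assoc]

theorem tsum_eq_zero_of_odd {f : ℤ → ℝ} (hf : ∀ m, f (-m) = -f m) : ∑' m, f m = 0 := by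
  have h := (Equiv.neg ℤ).tsum_eq f
  simp only [Equiv.neg_apply, hf, tsum_neg] at h
  linarith

theorem HasDerivAt.re_of_ofReal_comp {f : ℝ → ℝ} {z : ℂ} {t : ℝ}
    (h : HasDerivAt (fun s => (f s : ℂ)) z t) : HasDerivAt f z.re t ∧ (z.re : ℂ) = z := by
  have hre := Complex.reCLM.hasFDerivAt.comp_hasDerivAt t h
  have him := Complex.imCLM.hasFDerivAt.comp_hasDerivAt t h
  simp only [Function.comp_def, Complex.reCLM_apply, Complex.imCLM_apply, Complex.ofReal_re,
    Complex.ofReal_im] at hre him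
  exact ⟨hre, Complex.ext rfl (by simpa using (hasDerivAt_const t 0).unique him)⟩

theorem integral_Ioc_exp_int_mul_I (k : ℤ) :
    ∫ t in Set.Ioc (-π) π, Complex.exp (k * t * Complex.I) = if k = 0 then (2 * π : ℂ) else 0 := by
  rw [← intervalIntegral.integral_of_le (by linarith [pi_pos])]
  split_ifs with hk
  · simp [hk, two_mul]
  · have hkI : (k : ℂ) * Complex.I ≠ 0 := by simp [hk]
    simp_rw [mul_right_comm _ _ Complex.I]
    rw [integral_exp_mul_complex hkI]
    have hper : Complex.exp (k * Complex.I * π) = Complex.exp (k * Complex.I * ↑(-π)) := by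
      rw [Complex.exp_eq_exp_iff_exists_int]
      exact ⟨k, by push_cast; ring⟩
    rw [hper, sub_self, zero_div]

def fourierSum (c : ℤ → ℂ) (t : ℝ) : ℂ := ∑' m : ℤ, c m * Complex.exp (m * t * Complex.I)

theorem fourierSum_ofReal_eq_wgt {a : ℤ → ℝ} (heven : ∀ m, a (-m) = a m)
    (ha : Summable fun m => ‖a m‖) (t : ℝ) : fourierSum (fun m => a m) t = wgt a t := by
  have hterm : ∀ m : ℤ, (a m : ℂ) * Complex.exp (m * t * Complex.I) =
      ↑(a m * Real.cos (m * t)) + ↑(a m * Real.sin (m * t)) * Complex.I := by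
    intro m
    rw [show (m : ℂ) * t * Complex.I = ((m * t : ℝ) : ℂ) * Complex.I by push_cast; ring,
      Complex.exp_mul_I, ← Complex.ofReal_cos, ← Complex.ofReal_sin]
    push_cast
    ring
  have hcos : Summable fun m : ℤ => a m * Real.cos (m * t) :=
    ha.of_norm_bounded fun m => by
      simpa [abs_mul] using mul_le_of_le_one_right (abs_nonneg _) (Real.abs_cos_le_one _)
  have hsin : Summable fun m : ℤ => a m * Real.sin (m * t) :=
    ha.of_norm_bounded fun m => by
      simpa [abs_mul] using mul_le_of_le_one_right (abs_nonneg _) (Real.abs_sin_le_one _)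
  have hodd : ∑' m : ℤ, a m * Real.sin (m * t) = 0 :=
    tsum_eq_zero_of_odd fun m => by simp [heven, neg_mul, Real.sin_neg]
  rw [fourierSum, tsum_congr hterm, Summable.tsum_add (Complex.summable_ofReal.2 hcos)
    ((Complex.summable_ofReal.2 hsin).mul_right _), tsum_mul_right, ← Complex.ofReal_tsum,
    ← Complex.ofReal_tsum, hodd, wgt]
  simp

theorem hasDerivAt_fourierSum {c : ℤ → ℂ} (hc : Summable fun m => ‖c m‖)
    (hc' : Summable fun m : ℤ => ‖(m : ℂ) * c m‖) (t : ℝ) :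
    HasDerivAt (fourierSum c) (fourierSum (fun m : ℤ => (m : ℂ) * Complex.I * c m) t) t := by
  unfold fourierSum
  refine hasDerivAt_tsum (g := fun (m : ℤ) (s : ℝ) => c m * Complex.exp (m * s * Complex.I))
    (g' := fun (m : ℤ) (s : ℝ) => m * Complex.I * c m * Complex.exp (m * s * Complex.I))
    hc' (fun m s => ?_) (fun m s => ?_) (y₀ := 0) (by simpa using hc.of_norm) t
  · exact ((((hasDerivAt_id s).ofReal_comp.const_mul (m : ℂ)).mul_const Complex.I).cexp
      |>.const_mul (c m)).congr_deriv (by simp only [id, Complex.ofReal_one]; ring)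
  · simp [Complex.norm_exp, mul_comm]

instance {V : Type*} [Fintype V] : IsFiniteMeasure (torusBox V) := by
  unfold torusBox
  infer_instance

theorem integral_torusBox_prod_exp {V : Type*} [Fintype V] (k : V → ℤ) :
    ∫ θ, ∏ x, Complex.exp (k x * θ x * Complex.I) ∂torusBox V =
      if k = 0 then (2 * π : ℂ) ^ Fintype.card V else 0 := by
  rw [torusBox, integral_fintype_prod_eq_prod (fun x (t : ℝ) => Complex.exp (k x * t * Complex.I))]
  simp_rw [integral_Ioc_exp_int_mul_I, Finset.prod_ite_zero, funext_iff]
  simp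

theorem diamExp_neg {V E : Type*} [Fintype E] [DecidableEq V] (src tgt : E → V) (p : ℤ → ℝ)
    (F : (E → ℤ) → ℝ) : diamExp src tgt p (fun n => -F n) = -diamExp src tgt p F := by
  simp only [diamExp, neg_mul, tsum_neg, neg_div]

section Graph

variable {V E : Type*} [Fintype V] [Fintype E] [DecidableEq V] (src tgt : E → V)

theorem sum_mul_grad_eq_sum_divg_mul {R : Type*} [CommRing R] (ω : E → R) (θ : V → R) :
    ∑ e, ω e * grad src tgt θ e = ∑ x, divg src tgt ω x * θ x := by
  simp [grad, divg, mul_sub, sub_mul, Finset.sum_mul, ite_mul, Finset.sum_comm (γ := V)]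

theorem prod_fourierSum_grad_eq_tsum (q : E → ℤ → ℂ) (hq : ∀ e, Summable fun m => ‖q e m‖)
    (θ : V → ℝ) :
    ∏ e, fourierSum (q e) (grad src tgt θ e) =
      ∑' n : E → ℤ, (∏ e, q e (n e)) * ∏ x, Complex.exp (divg src tgt n x * θ x * Complex.I) := by
  have hq' : ∀ e, Summable fun m : ℤ =>
      ‖q e m * Complex.exp (m * grad src tgt θ e * Complex.I)‖ := by
    simpa [Complex.norm_exp] using hq
  unfold fourierSum
  rw [← (summable_prod_norm_and_tsum_prod_eq_prod_tsum _ hq').2]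
  congr 1 with n
  rw [Finset.prod_mul_distrib, ← Complex.exp_sum, ← Complex.exp_sum, ← Finset.sum_mul,
    ← Finset.sum_mul]
  have := sum_mul_grad_eq_sum_divg_mul src tgt (fun e => (n e : ℂ)) (fun x => (θ x : ℂ))
  push_cast [grad, divg] at this ⊢
  rw [this]

theorem integral_torusBox_prod_fourierSum (q : E → ℤ → ℂ)
    (hq : ∀ e, Summable fun m => ‖q e m‖) :
    ∫ θ, ∏ e, fourierSum (q e) (grad src tgt θ e) ∂torusBox V =
      (2 * π : ℂ) ^ Fintype.card V *
        ∑' n : {n : E → ℤ // divg src tgt n = 0}, ∏ e, q e (n.1 e) := by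
  set F : (E → ℤ) → (V → ℝ) → ℂ := fun n θ =>
    (∏ e, q e (n e)) * ∏ x, Complex.exp (divg src tgt n x * θ x * Complex.I)
  have hnorm : ∀ n θ, ‖F n θ‖ = ∏ e, ‖q e (n e)‖ := by
    simp [F, norm_prod, Complex.norm_exp]
  have hint : ∀ n, Integrable (F n) (torusBox V) := fun n =>
    Integrable.of_bound (by fun_prop) _ (.of_forall fun θ => (hnorm n θ).le)
  have hint_norm : Summable fun n => ∫ θ, ‖F n θ‖ ∂torusBox V := by
    simpa [hnorm] using (summable_prod_norm_and_tsum_prod_eq_prod_tsum q hq).1.mul_left _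
  have hmode : ∀ n, ∫ θ, F n θ ∂torusBox V = (2 * π : ℂ) ^ Fintype.card V *
      Set.indicator {n | divg src tgt n = 0} (fun n => ∏ e, q e (n e)) n := by
    intro n
    simp only [F, integral_const_mul, integral_torusBox_prod_exp, Set.indicator_apply]
    split_ifs <;> simp_all [mul_comm]
  simp_rw [prod_fourierSum_grad_eq_tsum src tgt q hq]
  rw [← integral_tsum_of_summable_integral_norm hint hint_norm]
  simp_rw [hmode]
  rw [tsum_mul_left, ← tsum_subtype]
  rfl

theorem integral_torusBox_eq_tsum (q : E → ℤ → ℂ) (hq : ∀ e, Summable fun m => ‖q e m‖)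
    (G : (V → ℝ) → ℝ) (H : (E → ℤ) → ℝ)
    (hG : ∀ θ, (G θ : ℂ) = ∏ e, fourierSum (q e) (grad src tgt θ e))
    (hH : ∀ n, ∏ e, q e (n e) = H n) :
    ∫ θ, G θ ∂torusBox V =
      (2 * π) ^ Fintype.card V * ∑' n : {n : E → ℤ // divg src tgt n = 0}, H n.1 := by
  apply Complex.ofReal_injective
  rw [← integral_complex_ofReal]
  simp_rw [hG, integral_torusBox_prod_fourierSum src tgt q hq, hH]
  push_cast [Complex.ofReal_tsum]
  rfl

theorem diamExp_eq_starSpinExp {p : ℤ → ℝ} (hsym : ∀ n, p (-n) = p n)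
    (hp : Summable fun m => ‖p m‖) (q : E → ℤ → ℂ) (hq : ∀ e, Summable fun m => ‖q e m‖)
    (F : (E → ℤ) → ℝ) (G : (V → ℝ) → ℝ)
    (hG : ∀ θ, ((G θ * ∏ e, wgt p (grad src tgt θ e) : ℝ) : ℂ) =
      ∏ e, fourierSum (q e) (grad src tgt θ e))
    (hF : ∀ n, ∏ e, q e (n e) = ((F n * ∏ e, p (n e) : ℝ) : ℂ)) :
    diamExp src tgt p F = starSpinExp src tgt p G := by
  have hden := integral_torusBox_eq_tsum src tgt (fun _ m => p m) (fun _ => by simpa using hp)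
    (fun θ => ∏ e, wgt p (grad src tgt θ e)) (fun n => ∏ e, p (n e))
    (fun θ => by simp [fourierSum_ofReal_eq_wgt hsym hp]) (fun n => by simp)
  rw [diamExp, starSpinExp, integral_torusBox_eq_tsum src tgt q hq _ _ hG hF, hden,
    mul_div_mul_left _ _ (by positivity)]

end Graph

theorem summable_norm_pow_mul_of_summable_sq_mul {p : ℤ → ℝ} (hnonneg : ∀ n, 0 ≤ p n)
    (hsum : Summable fun n : ℤ => (n : ℝ) ^ 2 * p n) {k : ℕ} (hk : k ≤ 2) :
    Summable fun m : ℤ => ‖(m : ℂ) ^ k * p m‖ := by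
  refine hsum.of_norm_bounded_eventually ?_
  filter_upwards [(Set.finite_singleton (0 : ℤ)).compl_mem_cofinite] with m hm
  have h1 : (1 : ℝ) ≤ |(m : ℝ)| := by exact_mod_cast Int.one_le_abs hm
  simp only [abs_abs, norm_mul, norm_pow, Complex.norm_intCast, Complex.norm_real,
    Real.norm_eq_abs, abs_of_nonneg (hnonneg m)]
  rw [← sq_abs]
  exact mul_le_mul_of_nonneg_right (pow_le_pow_right₀ h1 hk) (hnonneg m)

section SpinPotential

variable {p : ℤ → ℝ} (hsym : ∀ n, p (-n) = p n) (hnonneg : ∀ n, 0 ≤ p n)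
  (hsum : Summable fun n : ℤ => (n : ℝ) ^ 2 * p n) (hw : ∀ α, 0 < wgt p α)

-- `w'` and `w''` as termwise-differentiated series; these series are real (`hasDerivAt_wgt`,
-- `hasDerivAt_wgtDeriv`), so taking `re` loses nothing.
def wgtDeriv (p : ℤ → ℝ) (t : ℝ) : ℝ :=
  (fourierSum (fun m : ℤ => m * Complex.I * p m) t).re

def wgtDeriv2 (p : ℤ → ℝ) (t : ℝ) : ℝ :=
  (fourierSum (fun m : ℤ => m * Complex.I * (m * Complex.I * p m)) t).re

include hsym hnonneg hsum

theorem hasDerivAt_wgt (t : ℝ) :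
    HasDerivAt (wgt p) (wgtDeriv p t) t ∧
      (wgtDeriv p t : ℂ) = fourierSum (fun m : ℤ => m * Complex.I * p m) t := by
  have h0 := summable_norm_pow_mul_of_summable_sq_mul hnonneg hsum (k := 0) (by norm_num)
  have h1 := summable_norm_pow_mul_of_summable_sq_mul hnonneg hsum (k := 1) (by norm_num)
  have hW : (fun s => (wgt p s : ℂ)) = fourierSum (fun m => (p m : ℂ)) :=
    funext fun s => (fourierSum_ofReal_eq_wgt hsym (by simpa using h0) s).symm
  refine HasDerivAt.re_of_ofReal_comp ?_
  rw [hW]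
  exact hasDerivAt_fourierSum (by simpa using h0) (by simpa using h1) t

theorem hasDerivAt_wgtDeriv (t : ℝ) :
    HasDerivAt (wgtDeriv p) (wgtDeriv2 p t) t ∧
      (wgtDeriv2 p t : ℂ) =
        fourierSum (fun m : ℤ => m * Complex.I * (m * Complex.I * p m)) t := by
  have h1 := summable_norm_pow_mul_of_summable_sq_mul hnonneg hsum (k := 1) (by norm_num)
  have h2 := summable_norm_pow_mul_of_summable_sq_mul hnonneg hsum (k := 2) (by norm_num)
  have hW : (fun s => (wgtDeriv p s : ℂ)) = fourierSum (fun m : ℤ => m * Complex.I * p m) :=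
    funext fun s => (hasDerivAt_wgt hsym hnonneg hsum s).2
  refine HasDerivAt.re_of_ofReal_comp ?_
  rw [hW]
  exact hasDerivAt_fourierSum (by simpa using h1) (by simpa [sq, mul_assoc] using h2) t

include hw

theorem deriv_spinU : deriv (spinU p) = fun t => -(wgtDeriv p t / wgt p t) :=
  funext fun t => (((hasDerivAt_wgt hsym hnonneg hsum t).1.log (hw t).ne').neg).deriv

theorem deriv_deriv_spinU_sub_sq (t : ℝ) :
    deriv (deriv (spinU p)) t - deriv (spinU p) t ^ 2 = -(wgtDeriv2 p t / wgt p t) := by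
  have h : HasDerivAt (fun s => -(wgtDeriv p s / wgt p s)) _ t :=
    ((hasDerivAt_wgtDeriv hsym hnonneg hsum t).1.div (hasDerivAt_wgt hsym hnonneg hsum t).1
      (hw t).ne').neg
  rw [deriv_spinU hsym hnonneg hsum hw, h.deriv]
  field_simp [(hw t).ne']
  ring

theorem fourierSum_mul_I_mul_eq (t : ℝ) :
    fourierSum (fun m : ℤ => m * Complex.I * p m) t = ↑(-deriv (spinU p) t * wgt p t) := by
  rw [deriv_spinU hsym hnonneg hsum hw, ← (hasDerivAt_wgt hsym hnonneg hsum t).2]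
  field_simp [(hw t).ne']

theorem fourierSum_sq_mul_eq (t : ℝ) :
    fourierSum (fun m : ℤ => (m : ℂ) ^ 2 * p m) t =
      ↑((deriv (deriv (spinU p)) t - deriv (spinU p) t ^ 2) * wgt p t) := by
  have hneg : fourierSum (fun m : ℤ => (m : ℂ) ^ 2 * p m) t =
      -fourierSum (fun m : ℤ => m * Complex.I * (m * Complex.I * p m)) t := by
    rw [fourierSum, fourierSum, ← tsum_neg]
    congr 1 with m
    linear_combination (m : ℂ) ^ 2 * p m * Complex.exp (m * t * Complex.I) * Complex.I_sq
  rw [deriv_deriv_spinU_sub_sq hsym hnonneg hsum hw, hneg,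
    ← (hasDerivAt_wgtDeriv hsym hnonneg hsum t).2]
  field_simp [(hw t).ne']
  push_cast
  ring

end SpinPotential

section Covariance

variable {V E : Type*} [Fintype V] [Fintype E] [DecidableEq V] (src tgt : E → V)
  {p : ℤ → ℝ} (hsym : ∀ n, p (-n) = p n) (hnonneg : ∀ n, 0 ≤ p n)
  (hsum : Summable fun n : ℤ => (n : ℝ) ^ 2 * p n) (hw : ∀ α, 0 < wgt p α)

include hsym hnonneg hsum hw

theorem diamExp_sq_eq_starSpinExp (e : E) :
    diamExp src tgt p (fun n => (n e : ℝ) ^ 2) = starSpinExp src tgt p fun θ =>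
      deriv (deriv (spinU p)) (grad src tgt θ e) - deriv (spinU p) (grad src tgt θ e) ^ 2 := by
  classical
  have h0 := summable_norm_pow_mul_of_summable_sq_mul hnonneg hsum (k := 0) (by norm_num)
  have h2 := summable_norm_pow_mul_of_summable_sq_mul hnonneg hsum (k := 2) (by norm_num)
  have hp : Summable fun m => ‖p m‖ := by simpa using h0
  refine diamExp_eq_starSpinExp src tgt hsym hp
    (Function.update (fun _ m => (p m : ℂ)) e fun m => (m : ℂ) ^ 2 * p m) ?_ _ _ ?_ ?_
  · intro g
    rcases eq_or_ne g e with rfl | hg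
    · simpa using h2
    · simpa [hg] using h0
  · intro θ
    simp only [Function.apply_update (fun g c => fourierSum c (grad src tgt θ g)),
      fourierSum_sq_mul_eq hsym hnonneg hsum hw, fourierSum_ofReal_eq_wgt hsym hp]
    push_cast
    exact (prod_update_mul_apply_self _ _ _).symm
  · intro n
    simp only [Function.apply_update (fun g (c : ℤ → ℂ) => c (n g))]
    push_cast
    exact prod_update_mul_apply_self _ _ _

theorem diamExp_mul_eq_neg_starSpinExp {e f : E} (hef : e ≠ f) :
    diamExp src tgt p (fun n => (n e : ℝ) * n f) = -starSpinExp src tgt p fun θ =>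
      deriv (spinU p) (grad src tgt θ e) * deriv (spinU p) (grad src tgt θ f) := by
  classical
  have h0 := summable_norm_pow_mul_of_summable_sq_mul hnonneg hsum (k := 0) (by norm_num)
  have h1 := summable_norm_pow_mul_of_summable_sq_mul hnonneg hsum (k := 1) (by norm_num)
  have hp : Summable fun m => ‖p m‖ := by simpa using h0
  -- the factors `i n_e` and `i n_f` put `-n_e n_f` into the height weight
  rw [← neg_eq_iff_eq_neg, ← diamExp_neg]
  refine diamExp_eq_starSpinExp src tgt hsym hp
    (Function.update (Function.update (fun _ m => (p m : ℂ)) e fun m => m * Complex.I * p m)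
      f fun m => m * Complex.I * p m) ?_ _ _ ?_ ?_
  · intro g
    rcases eq_or_ne g f with rfl | hgf
    · simpa using h1
    rcases eq_or_ne g e with rfl | hge
    · simpa [hgf] using h1
    · simpa [hgf, hge] using h0
  · intro θ
    simp only [Function.apply_update (fun g c => fourierSum c (grad src tgt θ g)),
      fourierSum_mul_I_mul_eq hsym hnonneg hsum hw, fourierSum_ofReal_eq_wgt hsym hp]
    push_cast
    rw [prod_update_update_mul_apply_self (fun k => (wgt p (grad src tgt θ k) : ℂ)) hef]
    ring
  · intro n
    simp only [Function.apply_update (fun g (c : ℤ → ℂ) => c (n g))]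
    rw [prod_update_update_mul_apply_self (fun k => (p (n k) : ℂ)) hef]
    push_cast
    linear_combination (n e : ℂ) * n f * (∏ k, (p (n k) : ℂ)) * Complex.I_sq

end Covariance

/-- **Pointwise covariance identities** (equations (2.4)–(2.5)):
`ν_⋄[n_e²] = μ_★[𝒰''(J_e) - 𝒰'(J_e)²]` and, for distinct edges `e ≠ f`,
`ν_⋄[n_e n_f] = -μ_★[𝒰'(J_e) 𝒰'(J_f)]`, where `J = dθ`. -/
theorem pointwise_covariance_identities
    {V E : Type*} [Fintype V] [Fintype E] [DecidableEq V]
    (src tgt : E → V)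
    (p : ℤ → ℝ)
    (hsym : ∀ n : ℤ, p (-n) = p n)
    (hnonneg : ∀ n : ℤ, 0 ≤ p n)
    (hsum : Summable fun n : ℤ => (n : ℝ) ^ 2 * p n)
    (hw : ∀ α : ℝ, 0 < wgt p α) :
    (∀ e : E,
      diamExp src tgt p (fun n => ((n e : ℝ)) ^ 2)
        = starSpinExp src tgt p
            (fun θ => deriv (deriv (spinU p)) (grad src tgt θ e) -
              (deriv (spinU p) (grad src tgt θ e)) ^ 2))
    ∧
    (∀ e f : E, e ≠ f →
      diamExp src tgt p (fun n => (n e : ℝ) * (n f : ℝ))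
        = - starSpinExp src tgt p
            (fun θ => deriv (spinU p) (grad src tgt θ e) *
              deriv (spinU p) (grad src tgt θ f))) :=
  ⟨diamExp_sq_eq_starSpinExp src tgt hsym hnonneg hsum hw,
    fun _ _ hef => diamExp_mul_eq_neg_starSpinExp src tgt hsym hnonneg hsum hw hef⟩
end
end

section
/- Gradient–gradient covariance identity for the spin model (Lemma 6.2): For all f, g: V → ℝ, μ_★[(𝒰'(J), df)(𝒰'(J), dg)] = Σ_{e∈E} μ_★[𝒰''(J_e)] (df)_e (dg)_e, where under μ_★ we write J = dθ and (𝒰'(J), df) = Σ_{e∈E} 𝒰'(J_e) (df)_e. -/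
open MeasureTheory Real
noncomputable section

/-!
Translations of `θ` preserve the Haar measure of the torus, so the integral over the torus of the
derivative of a periodic function along a fixed direction vanishes. Apply this to
`(𝒰'(J), df) Π_e w(J_e)` differentiated in the direction `g`: since
`Π_e w(J_e) = exp (-Σ_e 𝒰(J_e))`, the derivative is
`(Σ_e 𝒰''(J_e) (df)_e (dg)_e - (𝒰'(J), df)(𝒰'(J), dg)) Π_e w(J_e)`, and its vanishing integral is
the identity before normalisation. The regularity of `𝒰` comes from `Σ n² e^{-𝒱(n)} < ∞`, which
allows differentiating the Fourier series of `w` twice termwise.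
-/

lemma abs_intCast_le_sq (n : ℤ) : |(n : ℝ)| ≤ (n : ℝ) ^ 2 := by
  rw [← Int.cast_abs]
  exact_mod_cast Int.natCast_natAbs n ▸ Int.natAbs_le_self_sq n

lemma norm_mul_mul_le_of_abs_le_one {a c b : ℝ} (hb : |b| ≤ 1) : ‖a * (c * b)‖ ≤ ‖c * a‖ := by
  rw [norm_mul, norm_mul, norm_mul, ← mul_assoc, mul_comm ‖c‖]
  exact mul_le_of_le_one_right (by positivity) hb

lemma norm_mul_intCast_mul_le_of_abs_le_one (n : ℤ) {a b : ℝ} (hb : |b| ≤ 1) :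
    ‖a * (n * b)‖ ≤ ‖(n : ℝ) ^ 2 * a‖ :=
  (norm_mul_mul_le_of_abs_le_one hb).trans <| by
    rw [norm_mul, norm_mul, norm_pow, Real.norm_eq_abs, Real.norm_eq_abs, sq_abs]
    exact mul_le_mul_of_nonneg_right (abs_intCast_le_sq n) (abs_nonneg a)

lemma Function.Periodic.deriv {𝕜 F : Type*} [NontriviallyNormedField 𝕜] [NormedAddCommGroup F]
    [NormedSpace 𝕜 F] {f : 𝕜 → F} {c : 𝕜} (h : Function.Periodic f c) :
    Function.Periodic (deriv f) c := fun x => by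
  rw [← deriv_comp_add_const, h.funext]

lemma hasLineDerivAt_sum_comp_mul {E : Type*} [Fintype E] {φ : ℝ → ℝ}
    (hφ : Differentiable ℝ φ) (x y z : E → ℝ) :
    HasLineDerivAt ℝ (fun x => ∑ e, φ (x e) * z e) (∑ e, deriv φ (x e) * y e * z e) x y := by
  have hline (e : E) : HasDerivAt (fun t : ℝ => x e + t * y e) (y e) 0 := by
    simpa using (hasDerivAt_mul_const (y e)).const_add (x e)
  have hterm : ∀ e ∈ Finset.univ, HasDerivAt (fun t : ℝ => φ (x e + t * y e) * z e)
      (deriv φ (x e) * y e * z e) 0 := fun e _ => by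
    simpa using ((hφ _).hasDerivAt.comp (0 : ℝ) (hline e)).mul_const (z e)
  simpa [HasLineDerivAt] using HasDerivAt.fun_sum hterm

def TorusPeriodic {ι : Type*} (F : (ι → ℝ) → ℝ) : Prop :=
  ∀ x (k : ι → ℤ), F (x + fun i => k i * (2 * π)) = F x

namespace TorusPeriodic

variable {ι : Type*} {F : (ι → ℝ) → ℝ}

lemma eq_comp_toIocMod (hF : TorusPeriodic F) (x : ι → ℝ) :
    F x = F fun i => toIocMod two_pi_pos (-π) (x i) := by
  rw [← hF (fun i => toIocMod two_pi_pos (-π) (x i)) fun i => toIocDiv two_pi_pos (-π) (x i)]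
  congr 1
  ext i
  simp [← zsmul_eq_mul, toIocMod_add_toIocDiv_zsmul]

lemma exists_bound [Finite ι] (hF : TorusPeriodic F) (hc : Continuous F) :
    ∃ C, ∀ x, ‖F x‖ ≤ C := by
  obtain ⟨C, hC⟩ := (isCompact_univ_pi fun _ : ι => isCompact_Icc (a := -π) (b := π))
    |>.exists_bound_of_continuousOn hc.continuousOn
  refine ⟨C, fun x => hF.eq_comp_toIocMod x ▸ hC _ fun i _ => ?_⟩
  have := toIocMod_mem_Ioc two_pi_pos (-π) (x i)
  exact ⟨this.1.le, this.2.trans_eq (by ring)⟩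

end TorusPeriodic

section Torus

local instance : Fact (0 < 2 * π) := ⟨two_pi_pos⟩

variable {V : Type*} [Fintype V]

instance : IsFiniteMeasure (torusBox V) := by
  unfold torusBox; infer_instance

lemma measurePreserving_torusBox :
    MeasurePreserving (fun (θ : V → ℝ) v => (θ v : AddCircle (2 * π))) (torusBox V)
      (Measure.pi fun _ => volume) := by
  refine measurePreserving_pi _ _ fun _ => ?_
  simpa [show -π + 2 * π = π by ring] using AddCircle.measurePreserving_mk (2 * π) (-π)

namespace TorusPeriodic

variable {F : (V → ℝ) → ℝ}

lemma integrable (hF : TorusPeriodic F) (hc : Continuous F) : Integrable F (torusBox V) :=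
  let ⟨C, hC⟩ := hF.exists_bound hc
  .of_bound hc.aestronglyMeasurable C (ae_of_all _ hC)

lemma integral_add_right (hF : TorusPeriodic F) (hc : Continuous F) (c : V → ℝ) :
    ∫ θ, F (θ + c) ∂torusBox V = ∫ θ, F θ ∂torusBox V := by
  set G : (V → AddCircle (2 * π)) → ℝ :=
    fun x => F fun v => AddCircle.equivIoc (2 * π) (-π) (x v)
  have hG : Measurable G := hc.measurable.comp <| measurable_pi_lambda _ fun v =>
    measurable_subtype_coe.comp <| (AddCircle.measurableEquivIoc (2 * π) (-π)).measurable.comp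
      (measurable_pi_apply v)
  have hFG : ∀ θ, F θ = G fun v => (θ v : AddCircle (2 * π)) := hF.eq_comp_toIocMod
  have hmp := measurePreserving_torusBox (V := V)
  calc ∫ θ, F (θ + c) ∂torusBox V
      = ∫ θ, G ((fun v => (θ v : AddCircle (2 * π))) + fun v => (c v : AddCircle (2 * π)))
          ∂torusBox V := by simp only [hFG]; rfl
    _ = ∫ x, G (x + fun v => (c v : AddCircle (2 * π))) ∂Measure.pi fun _ => volume := by
        rw [← hmp.map_eq, integral_map hmp.measurable.aemeasurable]
        exact (hG.comp (measurable_add_const _)).aestronglyMeasurable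
    _ = ∫ x, G x ∂Measure.pi fun _ => volume := integral_add_right_eq_self G _
    _ = ∫ θ, F θ ∂torusBox V := by
        rw [← hmp.map_eq, integral_map hmp.measurable.aemeasurable hG.aestronglyMeasurable]
        simp only [hFG]

lemma integral_eq_zero_of_hasLineDerivAt {F' : (V → ℝ) → ℝ} {v : V → ℝ} (hF : TorusPeriodic F)
    (hF' : TorusPeriodic F') (hFc : Continuous F) (hF'c : Continuous F')
    (hderiv : ∀ θ, HasLineDerivAt ℝ F (F' θ) θ v) :
    ∫ θ, F' θ ∂torusBox V = 0 := by
  obtain ⟨C, hC⟩ := hF'.exists_bound hF'c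
  have hshift (θ : V → ℝ) (t : ℝ) :
      HasDerivAt (fun s : ℝ => F (θ + s • v)) (F' (θ + t • v)) t := by
    have h0 : HasDerivAt (fun s : ℝ => F (θ + t • v + s • v)) (F' (θ + t • v)) (t - t) := by
      rw [sub_self]; exact hderiv _
    have h1 := h0.comp_sub_const t t
    simp only [add_assoc, ← add_smul, add_sub_cancel] at h1
    exact h1
  obtain ⟨-, hder⟩ := hasDerivAt_integral_of_dominated_loc_of_deriv_le (μ := torusBox V)
    (F := fun t θ => F (θ + t • v)) (F' := fun t θ => F' (θ + t • v)) (x₀ := 0)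
    (bound := fun _ => C) Filter.univ_mem
    (.of_forall fun t => (hFc.comp (continuous_add_const _)).aestronglyMeasurable)
    (by simpa using hF.integrable hFc)
    (hF'c.comp (continuous_add_const (0 • v))).aestronglyMeasurable
    (ae_of_all _ fun θ t _ => hC _) (integrable_const C)
    (ae_of_all _ fun θ t _ => hshift θ t)
  have hconst : (fun t : ℝ => ∫ θ, F (θ + t • v) ∂torusBox V) = fun _ => ∫ θ, F θ ∂torusBox V :=
    funext fun t => hF.integral_add_right hFc _
  rw [hconst] at hder
  simpa using hder.unique (hasDerivAt_const _ _)

end TorusPeriodic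

end Torus

section SpinPotential

lemma wgt_periodic (p : ℤ → ℝ) : Function.Periodic (wgt p) (2 * π) := fun α => by
  simp only [wgt, mul_add, cos_add_int_mul_two_pi]

lemma spinU_periodic (p : ℤ → ℝ) : Function.Periodic (spinU p) (2 * π) := fun α => by
  simp only [spinU, wgt_periodic p α]

@[simp]
lemma wgt_add_int_mul_two_pi (p : ℤ → ℝ) (x : ℝ) (n : ℤ) : wgt p (x + n * (2 * π)) = wgt p x :=
  (wgt_periodic p).int_mul n x

@[simp]
lemma deriv_spinU_add_int_mul_two_pi (p : ℤ → ℝ) (x : ℝ) (n : ℤ) :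
    deriv (spinU p) (x + n * (2 * π)) = deriv (spinU p) x :=
  (spinU_periodic p).deriv.int_mul n x

@[simp]
lemma deriv_deriv_spinU_add_int_mul_two_pi (p : ℤ → ℝ) (x : ℝ) (n : ℤ) :
    deriv (deriv (spinU p)) (x + n * (2 * π)) = deriv (deriv (spinU p)) x :=
  (spinU_periodic p).deriv.deriv.int_mul n x

variable {p : ℤ → ℝ} (hsum : Summable fun n : ℤ => (n : ℝ) ^ 2 * p n)
include hsum

lemma summable_of_summable_sq_mul : Summable p :=
  hsum.norm.of_norm_bounded_eventually <| by
    filter_upwards [(Set.finite_singleton (0 : ℤ)).compl_mem_cofinite] with n hn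
    rw [norm_mul, norm_pow]
    refine le_mul_of_one_le_left (norm_nonneg _) (one_le_pow₀ ?_)
    rw [Real.norm_eq_abs, ← Int.cast_abs]
    exact_mod_cast Int.one_le_abs hn

lemma hasDerivAt_wgt_s15 (α : ℝ) : HasDerivAt (wgt p) (∑' n : ℤ, p n * (n * -sin (n * α))) α :=
  hasDerivAt_tsum (g := fun n α => p n * cos (n * α))
    (g' := fun n α => p n * (n * -sin (n * α))) hsum.norm
    (fun n y => ((hasDerivAt_const_mul (n : ℝ)).cos).const_mul (p n) |>.congr_deriv (by ring))
    (fun n y => norm_mul_intCast_mul_le_of_abs_le_one n (by simpa using abs_sin_le_one _))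
    (by simpa using summable_of_summable_sq_mul hsum) α (y₀ := 0)

lemma hasDerivAt_deriv_wgt (α : ℝ) :
    HasDerivAt (fun α => ∑' n : ℤ, p n * (n * -sin (n * α)))
      (∑' n : ℤ, p n * (n ^ 2 * -cos (n * α))) α :=
  hasDerivAt_tsum (g := fun n α => p n * (n * -sin (n * α)))
    (g' := fun n α => p n * (n ^ 2 * -cos (n * α))) hsum.norm
    (fun n y => ((((hasDerivAt_const_mul (n : ℝ)).sin).neg.const_mul (n : ℝ)).const_mul
      (p n)).congr_deriv (by ring))
    (fun n y => norm_mul_mul_le_of_abs_le_one (by simpa using abs_cos_le_one _))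
    (by simp) α (y₀ := 0)

lemma contDiff_wgt : ContDiff ℝ 2 (wgt p) := by
  rw [show (2 : WithTop ℕ∞) = 1 + 1 from rfl, contDiff_succ_iff_deriv,
    funext fun α => (hasDerivAt_wgt_s15 hsum α).deriv, contDiff_one_iff_deriv]
  refine ⟨fun α => (hasDerivAt_wgt_s15 hsum α).differentiableAt, by simp,
    fun α => (hasDerivAt_deriv_wgt hsum α).differentiableAt, ?_⟩
  rw [funext fun α => (hasDerivAt_deriv_wgt hsum α).deriv]
  exact continuous_tsum (fun n => by fun_prop) hsum.norm fun n α =>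
    norm_mul_mul_le_of_abs_le_one (by simpa using abs_cos_le_one _)

variable (hw : ∀ α, 0 < wgt p α)
include hw

lemma contDiff_spinU : ContDiff ℝ 2 (spinU p) :=
  ((contDiff_wgt hsum).log fun α => (hw α).ne').neg

lemma contDiff_deriv_spinU : ContDiff ℝ 1 (deriv (spinU p)) :=
  (contDiff_succ_iff_deriv.mp (contDiff_spinU hsum hw)).2.2

lemma continuous_deriv_spinU : Continuous (deriv (spinU p)) :=
  (contDiff_deriv_spinU hsum hw).continuous

lemma continuous_deriv_deriv_spinU : Continuous (deriv (deriv (spinU p))) :=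
  (contDiff_deriv_spinU hsum hw).continuous_deriv le_rfl

variable {E : Type*} [Fintype E]

omit hsum in
lemma prod_wgt_eq_exp (x : E → ℝ) : ∏ e, wgt p (x e) = exp (-∑ e, spinU p (x e)) := by
  simp [spinU, Real.exp_sum, exp_log (hw _)]

lemma hasLineDerivAt_prod_wgt (x y : E → ℝ) :
    HasLineDerivAt ℝ (fun x => ∏ e, wgt p (x e))
      (-(∑ e, deriv (spinU p) (x e) * y e) * ∏ e, wgt p (x e)) x y := by
  have h := hasLineDerivAt_sum_comp_mul ((contDiff_spinU hsum hw).differentiable two_ne_zero)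
    x y 1
  simp only [Pi.one_apply, mul_one] at h
  simp only [prod_wgt_eq_exp hw]
  exact (HasDerivAt.exp (HasDerivAt.neg h)).congr_deriv
    (by simp only [Pi.neg_apply, zero_smul, add_zero]; ring)

lemma hasLineDerivAt_pairing_mul_prod_wgt (x y z : E → ℝ) :
    HasLineDerivAt ℝ (fun x => (∑ e, deriv (spinU p) (x e) * z e) * ∏ e, wgt p (x e))
      ((∑ e, deriv (deriv (spinU p)) (x e) * y e * z e) * ∏ e, wgt p (x e) -
        ((∑ e, deriv (spinU p) (x e) * z e) * (∑ e, deriv (spinU p) (x e) * y e)) *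
          ∏ e, wgt p (x e)) x y :=
  (HasDerivAt.mul (hasLineDerivAt_sum_comp_mul
      ((contDiff_deriv_spinU hsum hw).differentiable one_ne_zero) x y z)
    (hasLineDerivAt_prod_wgt hsum hw x y)).congr_deriv (by simp only [zero_smul, add_zero]; ring)

end SpinPotential

section Graph

variable {V E : Type*} (src tgt : E → V)

lemma grad_add_smul (θ f : V → ℝ) (t : ℝ) :
    grad src tgt (θ + t • f) = grad src tgt θ + t • grad src tgt f := by
  ext e; simp only [grad, Pi.add_apply, Pi.smul_apply, smul_eq_mul]; ring

lemma grad_add_int_mul_two_pi (θ : V → ℝ) (k : V → ℤ) :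
    grad src tgt (θ + fun v => k v * (2 * π)) =
      grad src tgt θ + fun e => (grad src tgt k e : ℤ) * (2 * π) := by
  ext e; simp only [grad, Pi.add_apply]; push_cast; ring

@[fun_prop]
lemma continuous_grad_apply (e : E) : Continuous fun θ : V → ℝ => grad src tgt θ e := by
  unfold grad; fun_prop

variable {src tgt}

lemma TorusPeriodic.comp_grad {H : (E → ℝ) → ℝ} (hH : TorusPeriodic H) :
    TorusPeriodic fun θ : V → ℝ => H (grad src tgt θ) := fun θ k => by
  simp only [grad_add_int_mul_two_pi, hH _ (grad src tgt k)]

lemma HasLineDerivAt.comp_grad {H : (E → ℝ) → ℝ} {L : ℝ} {θ f : V → ℝ}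
    (h : HasLineDerivAt ℝ H L (grad src tgt θ) (grad src tgt f)) :
    HasLineDerivAt ℝ (fun θ => H (grad src tgt θ)) L θ f := by
  simpa only [HasLineDerivAt, grad_add_smul] using h

end Graph

section Integral

variable {V E : Type*} [Fintype V] [Fintype E] (src tgt : E → V) {p : ℤ → ℝ}
  (hsum : Summable fun n : ℤ => (n : ℝ) ^ 2 * p n) (hw : ∀ α, 0 < wgt p α) (f g : V → ℝ)
include hsum hw

lemma integral_hessian_sub_pairing_mul_pairing :
    ∫ θ, (∑ e, deriv (deriv (spinU p)) (grad src tgt θ e) * grad src tgt g e * grad src tgt f e) *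
        ∏ e, wgt p (grad src tgt θ e) -
      ((∑ e, deriv (spinU p) (grad src tgt θ e) * grad src tgt f e) *
        (∑ e, deriv (spinU p) (grad src tgt θ e) * grad src tgt g e)) *
          ∏ e, wgt p (grad src tgt θ e) ∂torusBox V = 0 := by
  have := (contDiff_wgt hsum).continuous
  have := continuous_deriv_spinU hsum hw
  have := continuous_deriv_deriv_spinU hsum hw
  exact TorusPeriodic.integral_eq_zero_of_hasLineDerivAt (v := g)
    (F := fun θ => (∑ e, deriv (spinU p) (grad src tgt θ e) * grad src tgt f e) *
      ∏ e, wgt p (grad src tgt θ e))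
    (TorusPeriodic.comp_grad (H := fun x => (∑ e, deriv (spinU p) (x e) * grad src tgt f e) *
      ∏ e, wgt p (x e)) fun x k => by simp)
    (TorusPeriodic.comp_grad (H := fun x =>
      (∑ e, deriv (deriv (spinU p)) (x e) * grad src tgt g e * grad src tgt f e) *
        ∏ e, wgt p (x e) - ((∑ e, deriv (spinU p) (x e) * grad src tgt f e) *
          (∑ e, deriv (spinU p) (x e) * grad src tgt g e)) * ∏ e, wgt p (x e))
      fun x k => by simp)
    (by fun_prop) (by fun_prop)
    fun θ => (hasLineDerivAt_pairing_mul_prod_wgt hsum hw _ _ _).comp_grad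

lemma integral_pairing_mul_pairing :
    ∫ θ, ((∑ e, deriv (spinU p) (grad src tgt θ e) * grad src tgt f e) *
        (∑ e, deriv (spinU p) (grad src tgt θ e) * grad src tgt g e)) *
          ∏ e, wgt p (grad src tgt θ e) ∂torusBox V =
      ∑ e, (∫ θ, deriv (deriv (spinU p)) (grad src tgt θ e) *
          ∏ c, wgt p (grad src tgt θ c) ∂torusBox V) * (grad src tgt f e * grad src tgt g e) := by
  have := (contDiff_wgt hsum).continuous
  have := continuous_deriv_spinU hsum hw
  have := continuous_deriv_deriv_spinU hsum hw
  have hint_hessian (e : E) : Integrable (fun θ => (deriv (deriv (spinU p)) (grad src tgt θ e) *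
      ∏ c, wgt p (grad src tgt θ c)) * (grad src tgt f e * grad src tgt g e)) (torusBox V) :=
    TorusPeriodic.integrable (TorusPeriodic.comp_grad (src := src) (tgt := tgt) (H := fun x =>
      deriv (deriv (spinU p)) (x e) * ∏ c, wgt p (x c)) fun x k => by simp) (by fun_prop)
      |>.mul_const _
  have hint_pairing : Integrable (fun θ => ((∑ e, deriv (spinU p) (grad src tgt θ e) *
      grad src tgt f e) * (∑ e, deriv (spinU p) (grad src tgt θ e) * grad src tgt g e)) *
        ∏ e, wgt p (grad src tgt θ e)) (torusBox V) :=
    TorusPeriodic.integrable (TorusPeriodic.comp_grad (H := fun x =>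
      ((∑ e, deriv (spinU p) (x e) * grad src tgt f e) *
        (∑ e, deriv (spinU p) (x e) * grad src tgt g e)) * ∏ e, wgt p (x e))
      fun x k => by simp) (by fun_prop)
  have hzero := integral_hessian_sub_pairing_mul_pairing src tgt hsum hw f g
  have hhessian (θ : V → ℝ) :
      (∑ e, deriv (deriv (spinU p)) (grad src tgt θ e) * grad src tgt g e * grad src tgt f e) *
        ∏ e, wgt p (grad src tgt θ e) =
      ∑ e, (deriv (deriv (spinU p)) (grad src tgt θ e) * ∏ c, wgt p (grad src tgt θ c)) *
        (grad src tgt f e * grad src tgt g e) := by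
    rw [Finset.sum_mul]; exact Finset.sum_congr rfl fun e _ => by ring
  simp only [hhessian] at hzero
  rw [integral_sub (integrable_finsetSum _ fun e _ => hint_hessian e) hint_pairing, sub_eq_zero,
    integral_finsetSum _ fun e _ => hint_hessian e] at hzero
  simpa only [integral_mul_const] using hzero.symm

end Integral

theorem gradient_gradient_covariance_general
    {V E : Type*} [Fintype V] [Fintype E]
    (src tgt : E → V)
    (p : ℤ → ℝ)
    (hsum : Summable fun n : ℤ => (n : ℝ) ^ 2 * p n)
    (hw : ∀ α : ℝ, 0 < wgt p α)
    (f g : V → ℝ) :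
    starSpinExp src tgt p
        (fun θ => (∑ e, deriv (spinU p) (grad src tgt θ e) * grad src tgt f e) *
          (∑ e, deriv (spinU p) (grad src tgt θ e) * grad src tgt g e))
      = ∑ e, starSpinExp src tgt p
          (fun θ => deriv (deriv (spinU p)) (grad src tgt θ e)) *
            (grad src tgt f e * grad src tgt g e) := by
  rw [starSpinExp, integral_pairing_mul_pairing src tgt hsum hw f g, Finset.sum_div]
  exact Finset.sum_congr rfl fun e _ => by rw [starSpinExp]; ring

/-- **Gradient–gradient covariance identity for the spin model.**
For all `f, g : V → ℝ`:
`μ_★[(𝒰'(J), df)(𝒰'(J), dg)] = Σ_e μ_★[𝒰''(J_e)] (df)_e (dg)_e`, with `J = dθ`. -/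
theorem gradient_gradient_covariance
    {V E : Type*} [Fintype V] [Fintype E]
    (src tgt : E → V)
    (p : ℤ → ℝ)
    (hsym : ∀ n : ℤ, p (-n) = p n)
    (hnonneg : ∀ n : ℤ, 0 ≤ p n)
    (hsum : Summable fun n : ℤ => (n : ℝ) ^ 2 * p n)
    (hw : ∀ α : ℝ, 0 < wgt p α)
    (f g : V → ℝ) :
    starSpinExp src tgt p
        (fun θ => (∑ e, deriv (spinU p) (grad src tgt θ e) * grad src tgt f e) *
          (∑ e, deriv (spinU p) (grad src tgt θ e) * grad src tgt g e))
      = ∑ e, starSpinExp src tgt p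
          (fun θ => deriv (deriv (spinU p)) (grad src tgt θ e)) *
            (grad src tgt f e * grad src tgt g e) :=
  gradient_gradient_covariance_general src tgt p hsum hw f g
end
end
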